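/- For x ∈ (1, ∞), define the 2×2 matrices B_1(x) := [[ 1/2, √x/(x−1) ], [ 0, −1/2 ]], B_2(x) := [[ −1/4, √x/(x−1)² ], [ 0, 1/4 ]], B_3(x) := [[ −3/4, −x√x/(x−1)² ], [ 0, 3/4 ]]. Then this triple is an (upper-triangular, in fact algebraic) solution of the Schlesinger equations S_(3,2) with poles u_1 = 0, u_2 = x, u_3 = 1: for all x ∈ (1, ∞), dB_1/dx = [B_2, B_1]/x, dB_3/dx = [B_3, B_2]/(1 − x), dB_2/dx = −[B_2, B_1]/x − [B_2, B_3]/(x − 1); moreover B_1(x) + B_2(x) + B_3(x) = −B_∞ with the constant matrix B_∞ = diag(1/2, −1/2). -/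

import Mathlib

/- STATEMENT 16: The explicit upper-triangular (algebraic) triple B_1(x), B_2(x),
B_3(x) is a solution of the Schlesinger equations S_(3,2) with poles u_1 = 0,
u_2 = x, u_3 = 1 on (1,∞), and B_1 + B_2 + B_3 = −B_∞ with B_∞ = diag(1/2, −1/2). -/

attribute [local instance] Matrix.normedAddCommGroup Matrix.normedSpace

noncomputable def exB1 (x : ℝ) : Matrix (Fin 2) (Fin 2) ℝ :=
  !![1 / 2, Real.sqrt x / (x - 1);
     0, -(1 / 2)]

noncomputable def exB2 (x : ℝ) : Matrix (Fin 2) (Fin 2) ℝ :=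
  !![-(1 / 4), Real.sqrt x / (x - 1) ^ 2;
     0, 1 / 4]

noncomputable def exB3 (x : ℝ) : Matrix (Fin 2) (Fin 2) ℝ :=
  !![-(3 / 4), -(x * Real.sqrt x) / (x - 1) ^ 2;
     0, 3 / 4]

lemma hasDerivAt_mat2 {f : ℝ → Matrix (Fin 2) (Fin 2) ℝ} {D : Matrix (Fin 2) (Fin 2) ℝ} {x : ℝ}
    (h00 : HasDerivAt (fun t => f t 0 0) (D 0 0) x)
    (h01 : HasDerivAt (fun t => f t 0 1) (D 0 1) x)
    (h10 : HasDerivAt (fun t => f t 1 0) (D 1 0) x)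
    (h11 : HasDerivAt (fun t => f t 1 1) (D 1 1) x) :
    HasDerivAt f D x := by
  apply hasDerivAt_pi.2
  intro i
  apply hasDerivAt_pi.2
  intro j
  fin_cases i <;> fin_cases j <;> assumption

set_option maxHeartbeats 2000000 in
theorem explicit_triangular_schlesinger_solution :
    ∀ x ∈ Set.Ioi (1 : ℝ),
      HasDerivAt exB1 (x⁻¹ • (exB2 x * exB1 x - exB1 x * exB2 x)) x ∧
      HasDerivAt exB3 ((1 - x)⁻¹ • (exB3 x * exB2 x - exB2 x * exB3 x)) x ∧
      HasDerivAt exB2 (-(x⁻¹ • (exB2 x * exB1 x - exB1 x * exB2 x))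
          - (x - 1)⁻¹ • (exB2 x * exB3 x - exB3 x * exB2 x)) x ∧
      exB1 x + exB2 x + exB3 x
        = -Matrix.diagonal ![(1 : ℝ) / 2, -(1 / 2)] := by
  intro x hx
  have hx1 : (1:ℝ) < x := hx
  obtain ⟨s, hs1, rfl⟩ : ∃ s : ℝ, 1 < s ∧ x = s ^ 2 := by
    refine ⟨Real.sqrt x, ?_, (Real.sq_sqrt (by linarith)).symm⟩
    rw [show (1:ℝ) = Real.sqrt 1 by simp]
    exact Real.sqrt_lt_sqrt (by norm_num) hx1
  have hs0 : (0:ℝ) < s := by linarith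
  have hsne : s ≠ 0 := hs0.ne'
  have hm : s ^ 2 - 1 ≠ 0 := by nlinarith
  have hroot : Real.sqrt (s ^ 2) = s := Real.sqrt_sq hs0.le
  -- basic derivative facts at the point s^2
  have hds : HasDerivAt Real.sqrt (1 / (2 * s)) (s ^ 2) := by
    have := Real.hasDerivAt_sqrt (show (s ^ 2 : ℝ) ≠ 0 by positivity)
    simpa [hroot] using this
  have hlin : HasDerivAt (fun t : ℝ => t - 1) 1 (s ^ 2) := by
    simpa [Pi.sub_def] using (hasDerivAt_id (s ^ 2)).sub (hasDerivAt_const _ (1:ℝ))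
  have hpow : HasDerivAt (fun t : ℝ => (t - 1) ^ 2) (2 * (s ^ 2 - 1)) (s ^ 2) := by
    simpa [Pi.pow_def] using hlin.pow 2
  have h1 : HasDerivAt (fun t => Real.sqrt t / (t - 1))
      ((1 / (2 * s) * (s ^ 2 - 1) - s * 1) / (s ^ 2 - 1) ^ 2) (s ^ 2) := by
    simpa [hroot, Pi.div_def] using hds.div hlin hm
  have h2 : HasDerivAt (fun t => Real.sqrt t / (t - 1) ^ 2)
      ((1 / (2 * s) * (s ^ 2 - 1) ^ 2 - s * (2 * (s ^ 2 - 1))) / ((s ^ 2 - 1) ^ 2) ^ 2)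
      (s ^ 2) := by
    simpa [hroot, Pi.div_def] using hds.div hpow (pow_ne_zero 2 hm)
  have hnum : HasDerivAt (fun t : ℝ => -(t * Real.sqrt t))
      (-(1 * s + s ^ 2 * (1 / (2 * s)))) (s ^ 2) := by
    simpa [hroot, Pi.neg_def, Pi.mul_def] using ((hasDerivAt_id (s ^ 2)).mul hds).neg
  have h3 : HasDerivAt (fun t => -(t * Real.sqrt t) / (t - 1) ^ 2)
      ((-(1 * s + s ^ 2 * (1 / (2 * s))) * (s ^ 2 - 1) ^ 2
          - -(s ^ 2 * s) * (2 * (s ^ 2 - 1))) / ((s ^ 2 - 1) ^ 2) ^ 2) (s ^ 2) := by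
    simpa [hroot, Pi.div_def] using hnum.div hpow (pow_ne_zero 2 hm)
  refine ⟨?_, ?_, ?_, ?_⟩
  · refine hasDerivAt_mat2 ?_ ?_ ?_ ?_
    · have e : ((s ^ 2)⁻¹ • (exB2 (s ^ 2) * exB1 (s ^ 2) - exB1 (s ^ 2) * exB2 (s ^ 2))) 0 0
          = 0 := by
        simp [exB1, exB2, Matrix.mul_apply, Fin.sum_univ_two]
        ring_nf
        try tauto
      rw [e]
      simpa [exB1] using hasDerivAt_const (s ^ 2) ((1:ℝ) / 2)
    · have e : ((s ^ 2)⁻¹ • (exB2 (s ^ 2) * exB1 (s ^ 2) - exB1 (s ^ 2) * exB2 (s ^ 2))) 0 1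
          = (1 / (2 * s) * (s ^ 2 - 1) - s * 1) / (s ^ 2 - 1) ^ 2 := by
        simp [exB1, exB2, Matrix.mul_apply, Fin.sum_univ_two, hroot]
        field_simp
        try ring_nf
        try tauto
      rw [e]
      simpa [exB1] using h1
    · have e : ((s ^ 2)⁻¹ • (exB2 (s ^ 2) * exB1 (s ^ 2) - exB1 (s ^ 2) * exB2 (s ^ 2))) 1 0
          = 0 := by
        simp [exB1, exB2, Matrix.mul_apply, Fin.sum_univ_two]
      rw [e]
      simpa [exB1] using hasDerivAt_const (s ^ 2) ((0:ℝ))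
    · have e : ((s ^ 2)⁻¹ • (exB2 (s ^ 2) * exB1 (s ^ 2) - exB1 (s ^ 2) * exB2 (s ^ 2))) 1 1
          = 0 := by
        simp [exB1, exB2, Matrix.mul_apply, Fin.sum_univ_two]
        ring_nf
        try tauto
      rw [e]
      simpa [exB1] using hasDerivAt_const (s ^ 2) (-((1:ℝ) / 2))
  · refine hasDerivAt_mat2 ?_ ?_ ?_ ?_
    · have e : ((1 - s ^ 2)⁻¹ • (exB3 (s ^ 2) * exB2 (s ^ 2) - exB2 (s ^ 2) * exB3 (s ^ 2))) 0 0
          = 0 := by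
        simp [exB2, exB3, Matrix.mul_apply, Fin.sum_univ_two]
        ring_nf
        try tauto
      rw [e]
      simpa [exB3] using hasDerivAt_const (s ^ 2) (-((3:ℝ) / 4))
    · have e : ((1 - s ^ 2)⁻¹ • (exB3 (s ^ 2) * exB2 (s ^ 2) - exB2 (s ^ 2) * exB3 (s ^ 2))) 0 1
          = (-(1 * s + s ^ 2 * (1 / (2 * s))) * (s ^ 2 - 1) ^ 2
              - -(s ^ 2 * s) * (2 * (s ^ 2 - 1))) / ((s ^ 2 - 1) ^ 2) ^ 2 := by
        simp [exB2, exB3, Matrix.mul_apply, Fin.sum_univ_two, hroot]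
        have hm2 : 1 - s ^ 2 ≠ 0 := by intro h; apply hm; linarith
        field_simp
        try ring_nf
        try tauto
      rw [e]
      simpa [exB3] using h3
    · have e : ((1 - s ^ 2)⁻¹ • (exB3 (s ^ 2) * exB2 (s ^ 2) - exB2 (s ^ 2) * exB3 (s ^ 2))) 1 0
          = 0 := by
        simp [exB2, exB3, Matrix.mul_apply, Fin.sum_univ_two]
      rw [e]
      simpa [exB3] using hasDerivAt_const (s ^ 2) ((0:ℝ))
    · have e : ((1 - s ^ 2)⁻¹ • (exB3 (s ^ 2) * exB2 (s ^ 2) - exB2 (s ^ 2) * exB3 (s ^ 2))) 1 1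
          = 0 := by
        simp [exB2, exB3, Matrix.mul_apply, Fin.sum_univ_two]
        ring_nf
        try tauto
      rw [e]
      simpa [exB3] using hasDerivAt_const (s ^ 2) ((3:ℝ) / 4)
  · refine hasDerivAt_mat2 ?_ ?_ ?_ ?_
    · have e : (-((s ^ 2)⁻¹ • (exB2 (s ^ 2) * exB1 (s ^ 2) - exB1 (s ^ 2) * exB2 (s ^ 2)))
            - (s ^ 2 - 1)⁻¹ • (exB2 (s ^ 2) * exB3 (s ^ 2) - exB3 (s ^ 2) * exB2 (s ^ 2))) 0 0
          = 0 := by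
        simp [exB1, exB2, exB3, Matrix.mul_apply, Fin.sum_univ_two]
        ring_nf
        try tauto
      rw [e]
      simpa [exB2] using hasDerivAt_const (s ^ 2) (-((1:ℝ) / 4))
    · have e : (-((s ^ 2)⁻¹ • (exB2 (s ^ 2) * exB1 (s ^ 2) - exB1 (s ^ 2) * exB2 (s ^ 2)))
            - (s ^ 2 - 1)⁻¹ • (exB2 (s ^ 2) * exB3 (s ^ 2) - exB3 (s ^ 2) * exB2 (s ^ 2))) 0 1
          = (1 / (2 * s) * (s ^ 2 - 1) ^ 2 - s * (2 * (s ^ 2 - 1))) / ((s ^ 2 - 1) ^ 2) ^ 2 := by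
        simp [exB1, exB2, exB3, Matrix.mul_apply, Fin.sum_univ_two, hroot]
        field_simp
        try ring_nf
        try tauto
      rw [e]
      simpa [exB2] using h2
    · have e : (-((s ^ 2)⁻¹ • (exB2 (s ^ 2) * exB1 (s ^ 2) - exB1 (s ^ 2) * exB2 (s ^ 2)))
            - (s ^ 2 - 1)⁻¹ • (exB2 (s ^ 2) * exB3 (s ^ 2) - exB3 (s ^ 2) * exB2 (s ^ 2))) 1 0
          = 0 := by
        simp [exB1, exB2, exB3, Matrix.mul_apply, Fin.sum_univ_two]
      rw [e]
      simpa [exB2] using hasDerivAt_const (s ^ 2) ((0:ℝ))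
    · have e : (-((s ^ 2)⁻¹ • (exB2 (s ^ 2) * exB1 (s ^ 2) - exB1 (s ^ 2) * exB2 (s ^ 2)))
            - (s ^ 2 - 1)⁻¹ • (exB2 (s ^ 2) * exB3 (s ^ 2) - exB3 (s ^ 2) * exB2 (s ^ 2))) 1 1
          = 0 := by
        simp [exB1, exB2, exB3, Matrix.mul_apply, Fin.sum_univ_two]
        ring_nf
        try tauto
      rw [e]
      simpa [exB2] using hasDerivAt_const (s ^ 2) ((1:ℝ) / 4)
  · ext i j
    fin_cases i <;> fin_cases j <;>
      simp [exB1, exB2, exB3, Matrix.diagonal, hroot] <;> field_simp <;> ring
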